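/- Let k be an algebraically closed field, A a finitely generated commutative k-algebra, N a finitely generated A-module, and r a natural number. If N is finite locally free of rank r, then dim_k (N ⊗_A A/𝔪) = r for every maximal ideal 𝔪 ⊆ A. If moreover A is reduced, then the converse holds: N is finite locally free of rank r if and only if dim_k (N ⊗_A A/𝔪) = r for every maximal ideal 𝔪 ⊆ A. -/

import Mathlib

/-!
A finitely generated module over a commutative ring is *finite locally free of
rank `r`* if it is finitely generated projective of constant rank `r`, i.e. its
localization at every prime is free of rank `r`.  Note that for `A` a finitely
generated algebra over an algebraically closed field `k`, the residue field
`A ⧸ 𝔪` at every maximal ideal `𝔪` is `k`, so `dim_k (N ⊗_A A/𝔪)` is the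
`k`-dimension of `(A ⧸ 𝔪) ⊗[A] N`.
-/

open TensorProduct

noncomputable section

/-- `N` is finite locally free of rank `r` over `A`: finitely generated,
projective, and of constant rank `r` at every prime. -/
def FiniteLocallyFreeOfRank (A : Type*) [CommRing A]
    (N : Type*) [AddCommGroup N] [Module A N] (r : ℕ) : Prop :=
  Module.Finite A N ∧ Module.Projective A N ∧
    ∀ (P : Ideal A) (_ : P.IsPrime),
      Module.finrank (Localization.AtPrime P) (LocalizedModule P.primeCompl N) = r

/-!
For the forward direction, the fibre `(A ⧸ 𝔪) ⊗[A] N` of a finite flat module has dimension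
equal to the rank of `N` at `𝔪`, and `A ⧸ 𝔪 = k` by the Nullstellensatz.

For the converse, lift a basis of the fibre at `𝔪` to `n : Fin r → N` and let
`φ : (Fin r → A) → N` be the induced map. By Nakayama some `s ∉ 𝔪` satisfies
`s • N ⊆ range φ`. At every maximal ideal `J ∌ s` the fibre of `φ` is a surjection between
`r`-dimensional spaces, hence injective, so `s • ker φ` lies in every maximal ideal. In a
reduced Jacobson ring the Jacobson radical is zero, so `s` kills `ker φ` and `φ` becomes an
isomorphism at `𝔪`. Since the rank of a finite flat module is constant under generization,
`N` has rank `r` at every prime.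
-/

open Pointwise

theorem eq_zero_of_forall_mem_isMaximal {A : Type*} [CommRing A] [IsJacobsonRing A] [IsReduced A]
    {a : A} (h : ∀ J : Ideal A, J.IsMaximal → a ∈ J) : a = 0 := by
  have hbot : (⊥ : Ideal A).jacobson = ⊥ := by
    rw [← Ideal.radical_eq_jacobson]; exact nilradical_eq_zero A
  rw [← Ideal.mem_bot, ← hbot, Ideal.jacobson, Ideal.mem_sInf]
  exact fun J ⟨_, hJ⟩ => h J hJ

theorem IsLocalizedModule.map_bijective_of_smul_ker_eq_bot_of_smul_top_le
    {R M Mₛ P Pₛ : Type*} [CommRing R] [AddCommGroup M] [Module R M] [AddCommGroup Mₛ]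
    [Module R Mₛ] [AddCommGroup P] [Module R P] [AddCommGroup Pₛ] [Module R Pₛ]
    (S : Submonoid R) (f : M →ₗ[R] Mₛ) (f' : P →ₗ[R] Pₛ) [IsLocalizedModule S f]
    [IsLocalizedModule S f'] {g : M →ₗ[R] P} (s : S) (hker : s • LinearMap.ker g = ⊥)
    (hrange : s • (⊤ : Submodule R P) ≤ LinearMap.range g) :
    Function.Bijective (IsLocalizedModule.map S f f' g) := by
  refine ⟨LinearMap.ker_eq_bot.mp (eq_bot_iff.mpr ?_),
    LinearMap.range_eq_top.mp (eq_top_iff.mpr ?_)⟩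
  · rw [LinearMap.ker_localizedMap_eq_localized₀_ker, ← Submodule.localized₀_bot S f]
    exact Submodule.localized₀_le_localized₀_of_smul_le S f s hker.le
  · rw [LinearMap.range_localizedMap_eq_localized₀_range, ← Submodule.localized₀_top S f']
    exact Submodule.localized₀_le_localized₀_of_smul_le S f' s hrange

theorem one_tmul_linearCombination {A B N ι : Type*} [CommRing A] [CommRing B] [Algebra A B]
    [AddCommGroup N] [Module A N] [Fintype ι] (n : ι → N) (x : ι → A) :
    (1 : B) ⊗ₜ[A] Fintype.linearCombination A n x
      = Fintype.linearCombination B (fun i => (1 : B) ⊗ₜ[A] n i) (algebraMap A B ∘ x) := by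
  simp [Fintype.linearCombination_apply, tmul_sum, tmul_smul, algebraMap_smul]

section Fibre

variable {A K N : Type*} [CommRing A] [Field K] [Algebra A K] [AddCommGroup N] [Module A N]
  {ι : Type*} [Fintype ι] {n : ι → N} {s : A}

theorem linearCombination_one_tmul_surjective (hs : algebraMap A K s ≠ 0)
    (hrange : s • (⊤ : Submodule A N) ≤ LinearMap.range (Fintype.linearCombination A n)) :
    Function.Surjective (Fintype.linearCombination K fun i => (1 : K) ⊗ₜ[A] n i) := by
  set ψ := Fintype.linearCombination K fun i => (1 : K) ⊗ₜ[A] n i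
  have hone : ∀ m : N, (1 : K) ⊗ₜ[A] m ∈ LinearMap.range ψ := by
    intro m
    obtain ⟨x, hx⟩ := hrange (Submodule.smul_mem_pointwise_smul m s ⊤ trivial)
    have : (1 : K) ⊗ₜ[A] m = (algebraMap A K s)⁻¹ • ψ (algebraMap A K ∘ x) := by
      rw [← one_tmul_linearCombination, hx, tmul_smul, ← algebraMap_smul K s, smul_smul,
        inv_mul_cancel₀ hs, one_smul]
    exact this ▸ Submodule.smul_mem _ _ ⟨_, rfl⟩
  rw [← LinearMap.range_eq_top, eq_top_iff]
  rintro v -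
  induction v with
  | zero => exact zero_mem _
  | add v w hv hw => exact add_mem hv hw
  | tmul c m =>
    rw [← mul_one c, ← smul_eq_mul, ← smul_tmul']
    exact Submodule.smul_mem _ c (hone m)

theorem algebraMap_eq_zero_of_linearCombination_eq_zero (hs : algebraMap A K s ≠ 0)
    (hrange : s • (⊤ : Submodule A N) ≤ LinearMap.range (Fintype.linearCombination A n))
    (hrank : Module.finrank K (K ⊗[A] N) = Fintype.card ι) {x : ι → A}
    (hx : Fintype.linearCombination A n x = 0) (i : ι) : algebraMap A K (x i) = 0 := by
  have hsurj := linearCombination_one_tmul_surjective hs hrange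
  have : Module.Finite K (K ⊗[A] N) := Module.Finite.of_surjective _ hsurj
  have hinj := (LinearMap.injective_iff_surjective_of_finrank_eq_finrank
    (by rw [Module.finrank_fintype_fun_eq_card, hrank])).mpr hsurj
  have : algebraMap A K ∘ x = 0 :=
    hinj (by rw [← one_tmul_linearCombination, hx, tmul_zero, map_zero])
  exact congrFun this i

theorem smul_ker_linearCombination_eq_bot [IsJacobsonRing A] [IsReduced A]
    (hrange : s • (⊤ : Submodule A N) ≤ LinearMap.range (Fintype.linearCombination A n))
    (hrank : ∀ J : Ideal A, J.IsMaximal →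
      Module.finrank (A ⧸ J) ((A ⧸ J) ⊗[A] N) = Fintype.card ι) :
    s • LinearMap.ker (Fintype.linearCombination A n) = ⊥ := by
  refine eq_bot_iff.mpr fun _ hy => ?_
  obtain ⟨x, hx, rfl⟩ := (Submodule.mem_smul_pointwise_iff_exists _ _ _).mp hy
  refine (Submodule.mem_bot A).mpr (funext fun i => eq_zero_of_forall_mem_isMaximal fun J hJ => ?_)
  by_cases hsJ : s ∈ J
  · exact J.mul_mem_right _ hsJ
  let := Ideal.Quotient.field J
  have hs : algebraMap A (A ⧸ J) s ≠ 0 := by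
    rwa [Ne, Ideal.Quotient.algebraMap_eq, Ideal.Quotient.eq_zero_iff_mem]
  have := algebraMap_eq_zero_of_linearCombination_eq_zero hs hrange (hrank J hJ) hx i
  rw [Ideal.Quotient.algebraMap_eq, Ideal.Quotient.eq_zero_iff_mem] at this
  exact J.mul_mem_left s this

end Fibre

theorem exists_linearEquiv_localization_of_finrank_fiber {A N : Type*} [CommRing A]
    [IsJacobsonRing A] [IsReduced A] [AddCommGroup N] [Module A N] [Module.Finite A N] {r : ℕ}
    (h : ∀ J : Ideal A, J.IsMaximal → Module.finrank (A ⧸ J) ((A ⧸ J) ⊗[A] N) = r)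
    (𝔪 : Ideal A) [𝔪.IsMaximal] :
    Nonempty ((Fin r → Localization.AtPrime 𝔪)
      ≃ₗ[Localization.AtPrime 𝔪] LocalizedModule 𝔪.primeCompl N) := by
  let := Ideal.Quotient.field 𝔪
  let b := Module.finBasisOfFinrankEq (A ⧸ 𝔪) ((A ⧸ 𝔪) ⊗[A] N) (h 𝔪 ‹_›)
  let e := TensorProduct.quotTensorEquivQuotSMul N 𝔪
  choose n hn using fun i => Submodule.mkQ_surjective _ (e (b i))
  have hnb : ∀ i, (1 : A ⧸ 𝔪) ⊗ₜ[A] n i = b i := fun i => by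
    rw [← TensorProduct.quotTensorEquivQuotSMul_symm_mk, ← Submodule.mkQ_apply, hn,
      LinearEquiv.symm_apply_apply]
  set φ := Fintype.linearCombination A n
  have hfibre : Function.Surjective fun x => (1 : A ⧸ 𝔪) ⊗ₜ[A] φ x := by
    intro v
    choose x hx using fun i => Ideal.Quotient.mk_surjective (b.repr v i)
    refine ⟨x, ?_⟩
    change (1 : A ⧸ 𝔪) ⊗ₜ[A] Fintype.linearCombination A n x = v
    rw [one_tmul_linearCombination, Fintype.linearCombination_apply]
    simp only [hnb, Function.comp_apply, Ideal.Quotient.algebraMap_eq, hx, b.sum_repr]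
  have hsup : LinearMap.range φ ⊔ 𝔪 • ⊤ = ⊤ := by
    rw [sup_comm, ← Submodule.map_mkQ_eq_top, ← LinearMap.range_comp, LinearMap.range_eq_top]
    intro w
    obtain ⟨x, hx⟩ := hfibre (e.symm w)
    refine ⟨x, ?_⟩
    simp [← TensorProduct.quotTensorEquivQuotSMul_mk_one_tmul, hx, e]
  obtain ⟨s, hs1, hs⟩ := Submodule.exists_sub_one_mem_and_smul_le_of_fg_of_le_sup
    Module.Finite.fg_top le_rfl hsup.ge
  have hs𝔪 : s ∉ 𝔪 := fun hmem => Ideal.IsMaximal.ne_top ‹_› <|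
    (Ideal.eq_top_iff_one _).mpr (by simpa using 𝔪.sub_mem hmem hs1)
  have hker := smul_ker_linearCombination_eq_bot hs (by simpa using h)
  let Aₘ := Localization.AtPrime 𝔪
  have hbij := IsLocalizedModule.map_bijective_of_smul_ker_eq_bot_of_smul_top_le 𝔪.primeCompl
    (LinearMap.pi fun i => Algebra.linearMap A Aₘ ∘ₗ LinearMap.proj i)
    (LocalizedModule.mkLinearMap 𝔪.primeCompl N) (⟨s, hs𝔪⟩ : 𝔪.primeCompl) hker hs
  exact ⟨.ofBijective ((IsLocalizedModule.map _ _ _ φ).extendScalarsOfIsLocalization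
    𝔪.primeCompl Aₘ) hbij⟩

theorem finrank_eq_finrank_quotient_of_isAlgClosed (k : Type*) [Field k] [IsAlgClosed k]
    {A : Type*} [CommRing A] [Algebra k A] [Algebra.FiniteType k A]
    (𝔪 : Ideal A) [𝔪.IsMaximal] (V : Type*) [AddCommGroup V]
    [Module k V] [Module (A ⧸ 𝔪) V] [IsScalarTower k (A ⧸ 𝔪) V] :
    Module.finrank k V = Module.finrank (A ⧸ 𝔪) V := by
  let := Ideal.Quotient.field 𝔪
  -- Zariski's lemma: `A ⧸ 𝔪` is a finite, hence algebraic, extension of `k`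
  have : Module.Finite k (A ⧸ 𝔪) := finite_of_finite_type_of_isJacobsonRing k (A ⧸ 𝔪)
  have hk : Module.finrank k (A ⧸ 𝔪) = 1 :=
    (LinearEquiv.ofBijective (Algebra.linearMap k (A ⧸ 𝔪))
      IsAlgClosed.algebraMap_bijective_of_isIntegral).finrank_eq.symm.trans (Module.finrank_self k)
  rw [← Module.finrank_mul_finrank k (A ⧸ 𝔪) V, hk, one_mul]

theorem finrank_fiber_of_finiteLocallyFreeOfRank {A N : Type*} [CommRing A] [AddCommGroup N]
    [Module A N] {r : ℕ} (h : FiniteLocallyFreeOfRank A N r) (𝔪 : Ideal A) [𝔪.IsMaximal] :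
    Module.finrank (A ⧸ 𝔪) ((A ⧸ 𝔪) ⊗[A] N) = r := by
  obtain ⟨_, _, hrank⟩ := h
  let := Ideal.Quotient.field 𝔪
  let p : PrimeSpectrum (A ⧸ 𝔪) := ⟨⊥, Ideal.isPrime_bot⟩
  have hp : p.comap (algebraMap A (A ⧸ 𝔪)) = ⟨𝔪, inferInstance⟩ :=
    PrimeSpectrum.ext (Ideal.mk_ker (I := 𝔪))
  calc Module.finrank (A ⧸ 𝔪) ((A ⧸ 𝔪) ⊗[A] N)
      = Module.rankAtStalk ((A ⧸ 𝔪) ⊗[A] N) p := by simp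
    _ = Module.rankAtStalk N ⟨𝔪, inferInstance⟩ := by rw [Module.rankAtStalk_baseChange, hp]
    _ = r := hrank 𝔪 inferInstance

theorem finiteLocallyFreeOfRank_of_finrank_fiber {A N : Type*} [CommRing A]
    [IsJacobsonRing A] [IsReduced A] [AddCommGroup N] [Module A N]
    [Module.FinitePresentation A N] {r : ℕ}
    (h : ∀ 𝔪 : Ideal A, 𝔪.IsMaximal → Module.finrank (A ⧸ 𝔪) ((A ⧸ 𝔪) ⊗[A] N) = r) :
    FiniteLocallyFreeOfRank A N r := by
  have e (𝔪 : Ideal A) [𝔪.IsMaximal] :=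
    (exists_linearEquiv_localization_of_finrank_fiber h 𝔪).some
  have : Module.Projective A N :=
    Module.projective_of_localization_maximal fun 𝔪 _ => .of_equiv (e 𝔪)
  refine ⟨inferInstance, this, fun P _ => ?_⟩
  obtain ⟨𝔪, _, hP𝔪⟩ := P.exists_le_maximal Ideal.IsPrime.ne_top'
  change Module.rankAtStalk N ⟨P, ‹_›⟩ = r
  rw [Module.rankAtStalk_eq_of_le_of_finite_of_flat' N hP𝔪]
  exact (e 𝔪).finrank_eq.symm.trans (Module.finrank_fin_fun _)

theorem statement3 (k : Type*) [Field k] [IsAlgClosed k]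
    (A : Type*) [CommRing A] [Algebra k A] [Algebra.FiniteType k A]
    (N : Type*) [AddCommGroup N] [Module A N] [Module.Finite A N] (r : ℕ) :
    (FiniteLocallyFreeOfRank A N r →
      ∀ (𝔪 : Ideal A) (_ : 𝔪.IsMaximal), Module.finrank k ((A ⧸ 𝔪) ⊗[A] N) = r) ∧
    (IsReduced A →
      (FiniteLocallyFreeOfRank A N r ↔
        ∀ (𝔪 : Ideal A) (_ : 𝔪.IsMaximal), Module.finrank k ((A ⧸ 𝔪) ⊗[A] N) = r)) := by
  have : IsNoetherianRing A := Algebra.FiniteType.isNoetherianRing k A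
  have : IsJacobsonRing A := isJacobsonRing_of_finiteType (A := k)
  have : Module.FinitePresentation A N := Module.finitePresentation_of_finite A N
  have hk (𝔪 : Ideal A) [𝔪.IsMaximal] :=
    finrank_eq_finrank_quotient_of_isAlgClosed k 𝔪 ((A ⧸ 𝔪) ⊗[A] N)
  have forward (h : FiniteLocallyFreeOfRank A N r) (𝔪 : Ideal A) (_ : 𝔪.IsMaximal) :
      Module.finrank k ((A ⧸ 𝔪) ⊗[A] N) = r := by
    rw [hk, finrank_fiber_of_finiteLocallyFreeOfRank h]
  exact ⟨forward, fun _ => ⟨forward, fun h =>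
    finiteLocallyFreeOfRank_of_finrank_fiber fun 𝔪 _ => hk 𝔪 ▸ h 𝔪 ‹_›⟩⟩
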